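/- Consider the ternary QUANT iteration with unit teacher vector w* ∈ ℝⁿ and suppose w* ∉ Q₃. Then: (i) any subsequential limit of the normalized iterates lies in the closure of the orthant of w*; precisely, if (t_k) is strictly increasing, y^{t_k} ≠ 0 for all k, and y^{t_k}/‖y^{t_k}‖ converges to some u ∈ ℝⁿ, then u belongs to the closure of O(w*); (ii) if moreover every coordinate of w* is nonzero (O(w*) is regular), then y^t ∈ O(w*) for all but finitely many t. -/
import Mathlib


open Real Filter Set

/-- Euclidean norm of a vector in `Fin k → ℝ`. -/
noncomputable def euclNorm {k : ℕ} (x : Fin k → ℝ) : ℝ := Real.sqrt (∑ i, x i ^ 2)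

/-- ℓ¹ norm of a vector in `Fin k → ℝ`. -/
noncomputable def l1Norm {k : ℕ} (x : Fin k → ℝ) : ℝ := ∑ i, |x i|

/-- `s` is a ternary sign vector, i.e. `s ∈ {−1,0,1}ⁿ`. -/
def IsTern {k : ℕ} (s : Fin k → ℝ) : Prop := ∀ i, s i = -1 ∨ s i = 0 ∨ s i = 1

/-- `x` belongs to the ternary quantized set `Q₃ = {δ·s : δ ≥ 0, s ∈ {−1,0,1}ⁿ}`. -/
def InQ3 {k : ℕ} (x : Fin k → ℝ) : Prop :=
  ∃ δ : ℝ, 0 ≤ δ ∧ ∃ s : Fin k → ℝ, IsTern s ∧ x = δ • s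

/-- `u` is a normalized ternary projection of `y`: `u = s/‖s‖` for a nonzero
ternary sign vector `s` maximizing `⟨y, s'⟩/‖s'‖` over nonzero ternary `s'`. -/
noncomputable def IsNTernProj {k : ℕ} (y u : Fin k → ℝ) : Prop :=
  ∃ s : Fin k → ℝ, IsTern s ∧ s ≠ 0 ∧
    (∀ s' : Fin k → ℝ, IsTern s' → s' ≠ 0 →
      (∑ i, y i * s' i) / euclNorm s' ≤ (∑ i, y i * s i) / euclNorm s) ∧
    u = fun i => s i / euclNorm s

/-- The orthant of `x`: vectors whose coordinates have the same signs as those of `x`. -/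
def Orth {k : ℕ} (x : Fin k → ℝ) : Set (Fin k → ℝ) :=
  {y | ∀ i, Real.sign (y i) = Real.sign (x i)}


lemma sum_sq_nonneg {n : ℕ} (x : Fin n → ℝ) : 0 ≤ ∑ i, x i ^ 2 :=
  Finset.sum_nonneg fun i _ => sq_nonneg _

lemma euclNorm_def {n : ℕ} (x : Fin n → ℝ) : euclNorm x = Real.sqrt (∑ i, x i ^ 2) := rfl

lemma sq_euclNorm {n : ℕ} (x : Fin n → ℝ) : euclNorm x ^ 2 = ∑ i, x i ^ 2 :=
  Real.sq_sqrt (sum_sq_nonneg x)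

lemma euclNorm_pos {n : ℕ} {x : Fin n → ℝ} (hx : x ≠ 0) : 0 < euclNorm x := by
  obtain ⟨i, hi⟩ : ∃ i, x i ≠ 0 := by
    by_contra h; push_neg at h; exact hx (funext h)
  exact Real.sqrt_pos.2 <| Finset.sum_pos' (fun j _ => sq_nonneg _)
    ⟨i, Finset.mem_univ i, by positivity⟩

lemma abs_le_euclNorm {n : ℕ} (x : Fin n → ℝ) (i : Fin n) : |x i| ≤ euclNorm x := by
  have h : x i ^ 2 ≤ ∑ j, x j ^ 2 :=
    Finset.single_le_sum (fun j _ => sq_nonneg (x j)) (Finset.mem_univ i)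
  calc |x i| = Real.sqrt (x i ^ 2) := (Real.sqrt_sq_eq_abs _).symm
    _ ≤ euclNorm x := Real.sqrt_le_sqrt h

lemma inner_le_euclNorm {n : ℕ} (x z : Fin n → ℝ) :
    ∑ i, x i * z i ≤ euclNorm x * euclNorm z := by
  have h := Finset.sum_mul_sq_le_sq_mul_sq Finset.univ x z
  have h2 : |∑ i, x i * z i| ≤ Real.sqrt ((∑ i, x i ^ 2) * (∑ i, z i ^ 2)) := by
    rw [← Real.sqrt_sq_eq_abs]
    exact Real.sqrt_le_sqrt h
  calc ∑ i, x i * z i ≤ |∑ i, x i * z i| := le_abs_self _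
    _ ≤ Real.sqrt ((∑ i, x i ^ 2) * (∑ i, z i ^ 2)) := h2
    _ = euclNorm x * euclNorm z := Real.sqrt_mul (sum_sq_nonneg x) _

lemma tern_sq_one {n : ℕ} {s : Fin n → ℝ} (hts : IsTern s) {i : Fin n} (hi : s i ≠ 0) :
    s i ^ 2 = 1 := by rcases hts i with h | h | h <;> simp [h] at hi ⊢ <;> norm_num

lemma tern_abs_one {n : ℕ} {s : Fin n → ℝ} (hts : IsTern s) {i : Fin n} (hi : s i ≠ 0) :
    |s i| = 1 := by rcases hts i with h | h | h <;> simp [h] at hi ⊢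

lemma tern_one_le {n : ℕ} {s : Fin n → ℝ} (hts : IsTern s) (hs0 : s ≠ 0) :
    1 ≤ ∑ i, s i ^ 2 := by
  obtain ⟨j, hj⟩ : ∃ j, s j ≠ 0 := by
    by_contra h; push_neg at h; exact hs0 (funext h)
  have h1 := tern_sq_one hts hj
  have h2 : s j ^ 2 ≤ ∑ i, s i ^ 2 :=
    Finset.single_le_sum (fun i _ => sq_nonneg (s i)) (Finset.mem_univ j)
  linarith

lemma tern_sum_sq_le {n : ℕ} {s : Fin n → ℝ} (hts : IsTern s) : ∑ i, s i ^ 2 ≤ n := by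
  calc ∑ i, s i ^ 2 ≤ ∑ _i : Fin n, (1 : ℝ) :=
        Finset.sum_le_sum fun i _ => by rcases hts i with h | h | h <;> norm_num [h]
    _ = n := by simp

lemma normalized_sum_sq {n : ℕ} {s : Fin n → ℝ} (hs0 : s ≠ 0) :
    ∑ i, (s i / euclNorm s) ^ 2 = 1 := by
  have hN := euclNorm_pos hs0
  have hK := sq_euclNorm s
  simp only [div_pow]
  rw [← Finset.sum_div, ← hK]
  field_simp


set_option maxHeartbeats 1000000 in
lemma proj_core {n : ℕ} {y u : Fin n → ℝ} (hy : y ≠ 0) (h : IsNTernProj y u) :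
    (∀ i, u i ≠ 0 → 0 < y i * u i) ∧ (∀ i, u i ≠ 0 → euclNorm y ≤ 2 * n * |y i|) := by
  classical
  obtain ⟨s, hts, hs0, hmax, hu⟩ := h
  have hN : 0 < euclNorm s := euclNorm_pos hs0
  have hNK : euclNorm s ^ 2 = ∑ i, s i ^ 2 := sq_euclNorm s
  have hK1 : 1 ≤ ∑ i, s i ^ 2 := tern_one_le hts hs0
  have hKn : ∑ i, s i ^ 2 ≤ (n : ℝ) := tern_sum_sq_le hts
  -- single-coordinate test vectors
  have hrj : ∀ j, |y j| ≤ (∑ i, y i * s i) / euclNorm s := by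
    intro j
    set e : Fin n → ℝ := fun i => if i = j then (if 0 ≤ y j then (1:ℝ) else -1) else 0 with hedef
    have hte : IsTern e := by
      intro i; by_cases hij : i = j <;> by_cases h0 : 0 ≤ y j <;> simp [hedef, hij, h0]
    have he0 : e ≠ 0 := by
      intro hcon
      have := congrFun hcon j
      by_cases h0 : 0 ≤ y j <;> simp [hedef, h0] at this
    have hesum : ∑ i, e i ^ 2 = 1 := by
      have h1 : ∀ i, e i ^ 2 = if i = j then (1:ℝ) else 0 := by
        intro i; by_cases hij : i = j <;> by_cases h0 : 0 ≤ y j <;> simp [hedef, hij, h0]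
      rw [Finset.sum_congr rfl fun i _ => h1 i]
      simp
    have heN : euclNorm e = 1 := by rw [euclNorm_def, hesum, Real.sqrt_one]
    have heA : ∑ i, y i * e i = |y j| := by
      have h1 : ∀ i, y i * e i = if i = j then |y j| else 0 := by
        intro i
        by_cases hij : i = j <;> by_cases h0 : 0 ≤ y j <;>
          simp [hedef, hij, h0, abs_of_nonneg, abs_of_neg, lt_of_not_ge]
      rw [Finset.sum_congr rfl fun i _ => h1 i]
      simp
    have := hmax e hte he0
    rwa [heN, heA, div_one] at this
  obtain ⟨j0, hj0⟩ : ∃ j, y j ≠ 0 := by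
    by_contra hcon; push_neg at hcon; exact hy (funext hcon)
  have hr0 : 0 < (∑ i, y i * s i) / euclNorm s :=
    lt_of_lt_of_le (abs_pos.2 hj0) (hrj j0)
  have hApos : 0 < ∑ i, y i * s i := by
    rcases div_pos_iff.mp hr0 with ⟨h1, _⟩ | ⟨_, h2⟩
    · exact h1
    · linarith
  have hny : euclNorm y ≤ Real.sqrt n * ((∑ i, y i * s i) / euclNorm s) := by
    set r := (∑ i, y i * s i) / euclNorm s with hrdef
    have h1 : ∑ i, y i ^ 2 ≤ ∑ _i : Fin n, r ^ 2 := by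
      apply Finset.sum_le_sum
      intro i _
      have := hrj i
      nlinarith [abs_nonneg (y i), sq_abs (y i)]
    have h2 : ∑ _i : Fin n, r ^ 2 = (n : ℝ) * r ^ 2 := by
      simp [Finset.sum_const, Finset.card_univ, nsmul_eq_mul]
    calc euclNorm y = Real.sqrt (∑ i, y i ^ 2) := rfl
      _ ≤ Real.sqrt ((n : ℝ) * r ^ 2) := Real.sqrt_le_sqrt (by linarith)
      _ = Real.sqrt n * r := by
          rw [Real.sqrt_mul (Nat.cast_nonneg n), Real.sqrt_sq hr0.le]
  -- nonnegativity of y i * s i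
  have hsgn0 : ∀ i, 0 ≤ y i * s i := by
    intro i
    by_contra hcon; push_neg at hcon
    have hsi : s i ≠ 0 := by
      intro h0; rw [h0, mul_zero] at hcon; exact lt_irrefl 0 hcon
    set e : Fin n → ℝ := fun j => if j = i then -s i else s j with hedef
    have hte : IsTern e := by
      intro j
      by_cases hj : j = i
      · rcases hts i with h | h | h <;> simp [hedef, hj, h]
      · simpa [hedef, hj] using hts j
    have he0 : e ≠ 0 := by
      intro hcon2
      have := congrFun hcon2 i
      simp [hedef] at this
      exact hsi this
    have heN : euclNorm e = euclNorm s := by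
      rw [euclNorm_def, euclNorm_def]
      congr 1
      apply Finset.sum_congr rfl
      intro j _
      by_cases hj : j = i <;> simp [hedef, hj]
    have heA : ∑ j, y j * e j = (∑ j, y j * s j) - 2 * (y i * s i) := by
      have h1 : ∀ j, y j * e j = y j * s j - (if j = i then 2 * (y i * s i) else 0) := by
        intro j
        by_cases hj : j = i
        · subst hj; simp [hedef]; ring
        · simp [hedef, hj]
      rw [Finset.sum_congr rfl fun j _ => h1 j, Finset.sum_sub_distrib]
      simp
    have hle := hmax e hte he0
    rw [heN, heA] at hle
    rw [div_le_div_iff_of_pos_right hN] at hle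
    linarith
  -- strict positivity on the support
  have hpos : ∀ i, s i ≠ 0 → 0 < y i * s i := by
    intro i hsi
    rcases (hsgn0 i).lt_or_eq with h | h
    · exact h
    exfalso
    have hyi : y i = 0 := by
      rcases mul_eq_zero.mp h.symm with h' | h'
      · exact h'
      · exact absurd h' hsi
    set e : Fin n → ℝ := fun j => if j = i then 0 else s j with hedef
    have hte : IsTern e := by
      intro j; by_cases hj : j = i
      · simp [hedef, hj]
      · simpa [hedef, hj] using hts j
    have hesq : ∑ j, e j ^ 2 = (∑ j, s j ^ 2) - 1 := by
      have hsq1 := tern_sq_one hts hsi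
      have h1 : ∀ j, e j ^ 2 = s j ^ 2 - (if j = i then 1 else 0) := by
        intro j; by_cases hj : j = i <;> simp [hedef, hj, hsq1]
      rw [Finset.sum_congr rfl fun j _ => h1 j, Finset.sum_sub_distrib]
      simp
    have heA : ∑ j, y j * e j = ∑ j, y j * s j := by
      apply Finset.sum_congr rfl
      intro j _
      by_cases hj : j = i
      · subst hj; simp [hedef, hyi]
      · simp [hedef, hj]
    by_cases he0 : e = 0
    · have hAz : ∑ j, y j * s j = 0 := by
        apply Finset.sum_eq_zero
        intro j _
        by_cases hj : j = i
        · subst hj; simp [hyi]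
        · have := congrFun he0 j
          simp [hedef, hj] at this
          simp [this]
      linarith
    · have hKe1 : 1 ≤ (∑ j, s j ^ 2) - 1 := by
        have := tern_one_le hte he0
        rwa [hesq] at this
      have heN : euclNorm e = Real.sqrt ((∑ j, s j ^ 2) - 1) := by
        rw [euclNorm_def, hesq]
      have hsqK : Real.sqrt (∑ j, s j ^ 2) = euclNorm s := by
        rw [← hNK, Real.sqrt_sq hN.le]
      have hlt : Real.sqrt ((∑ j, s j ^ 2) - 1) < euclNorm s := by
        rw [← hsqK]
        exact Real.sqrt_lt_sqrt (by linarith) (by linarith)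
      have hle := hmax e hte he0
      rw [heN, heA] at hle
      have hsp : 0 < Real.sqrt ((∑ j, s j ^ 2) - 1) := by
        apply Real.sqrt_pos.2; linarith
      have := div_lt_div_of_pos_left hApos hsp hlt
      linarith
  -- threshold
  have hthr : ∀ i, s i ≠ 0 → euclNorm y ≤ 2 * n * |y i| := by
    intro i hsi
    have hyspos := hpos i hsi
    have hysabs : y i * s i = |y i| := by
      have habs := tern_abs_one hts hsi
      calc y i * s i = |y i * s i| := (abs_of_pos hyspos).symm
        _ = |y i| * |s i| := abs_mul _ _
        _ = |y i| := by rw [habs, mul_one]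
    set e : Fin n → ℝ := fun j => if j = i then 0 else s j with hedef
    have hte : IsTern e := by
      intro j; by_cases hj : j = i
      · simp [hedef, hj]
      · simpa [hedef, hj] using hts j
    have hesq : ∑ j, e j ^ 2 = (∑ j, s j ^ 2) - 1 := by
      have hsq1 := tern_sq_one hts hsi
      have h1 : ∀ j, e j ^ 2 = s j ^ 2 - (if j = i then 1 else 0) := by
        intro j; by_cases hj : j = i <;> simp [hedef, hj, hsq1]
      rw [Finset.sum_congr rfl fun j _ => h1 j, Finset.sum_sub_distrib]
      simp
    have heA : ∑ j, y j * e j = (∑ j, y j * s j) - |y i| := by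
      have h1 : ∀ j, y j * e j = y j * s j - (if j = i then |y i| else 0) := by
        intro j; by_cases hj : j = i
        · subst hj; simp [hedef, ← hysabs]
        · simp [hedef, hj]
      rw [Finset.sum_congr rfl fun j _ => h1 j, Finset.sum_sub_distrib]
      simp
    have hn1 : (1:ℝ) ≤ n := by
      have := i.pos
      exact_mod_cast this
    by_cases he0 : e = 0
    · -- support is the singleton {i}
      have hA1 : ∑ j, y j * s j = |y i| := by
        rw [Finset.sum_eq_single i]
        · exact hysabs
        · intro j _ hj
          have := congrFun he0 j
          simp [hedef, hj] at this
          simp [this]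
        · intro hcon; exact absurd (Finset.mem_univ i) hcon
      have hKval : ∑ j, s j ^ 2 = 1 := by
        rw [Finset.sum_eq_single i]
        · exact tern_sq_one hts hsi
        · intro j _ hj
          have := congrFun he0 j
          simp [hedef, hj] at this
          simp [this]
        · intro hcon; exact absurd (Finset.mem_univ i) hcon
      have hNval : euclNorm s = 1 := by
        have h2 : euclNorm s ^ 2 = 1 := by rw [hNK, hKval]
        nlinarith
      have hsn : Real.sqrt n ≤ 2 * n := by
        calc Real.sqrt n ≤ Real.sqrt ((2 * n) ^ 2) := Real.sqrt_le_sqrt (by nlinarith)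
          _ = 2 * n := Real.sqrt_sq (by positivity)
      calc euclNorm y ≤ Real.sqrt n * ((∑ j, y j * s j) / euclNorm s) := hny
        _ = Real.sqrt n * |y i| := by rw [hNval, div_one, hA1]
        _ ≤ 2 * n * |y i| := mul_le_mul_of_nonneg_right hsn (abs_nonneg _)
    · have hKe1 : 1 ≤ (∑ j, s j ^ 2) - 1 := by
        have := tern_one_le hte he0
        rwa [hesq] at this
      have heN : euclNorm e = Real.sqrt ((∑ j, s j ^ 2) - 1) := by
        rw [euclNorm_def, hesq]
      set N := euclNorm s with hNdef
      set N' := Real.sqrt ((∑ j, s j ^ 2) - 1) with hN'def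
      have hN'pos : 0 < N' := Real.sqrt_pos.2 (by linarith)
      have hN'sq : N' ^ 2 = (∑ j, s j ^ 2) - 1 := Real.sq_sqrt (by linarith)
      have hN'leN : N' ≤ N := by
        nlinarith [hN'pos, hN, hNK, hN'sq]
      have hle := hmax e hte he0
      rw [heN, heA] at hle
      set r := (∑ j, y j * s j) / N with hrdef
      have hAr : ∑ j, y j * s j = r * N := by
        rw [hrdef]; field_simp
      have h1 : (∑ j, y j * s j) - |y i| ≤ r * N' := by
        rw [div_le_iff₀ hN'pos] at hle
        exact hle
      have h2 : r * (N - N') ≤ |y i| := by nlinarith [hAr]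
      have h3 : (N - N') * (N + N') = 1 := by
        have : (N - N') * (N + N') = N ^ 2 - N' ^ 2 := by ring
        rw [this, hNK, hN'sq]; ring
      have h5 : 1 ≤ (N - N') * (2 * N) := by nlinarith
      have hNsn : N ≤ Real.sqrt n := by
        have : Real.sqrt (∑ j, s j ^ 2) = N := by rw [← hNK, Real.sqrt_sq hN.le]
        rw [← this]
        exact Real.sqrt_le_sqrt hKn
      have h6 : r ≤ 2 * N * |y i| := by
        have ha := mul_le_mul_of_nonneg_left h5 hr0.le
        have hb := mul_le_mul_of_nonneg_right h2 (by positivity : (0:ℝ) ≤ 2 * N)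
        nlinarith
      have hsnpos : 0 < Real.sqrt n := lt_of_lt_of_le hN hNsn
      have hss : Real.sqrt (n:ℝ) * Real.sqrt (n:ℝ) = (n : ℝ) :=
        Real.mul_self_sqrt (by positivity)
      calc euclNorm y ≤ Real.sqrt n * r := hny
        _ ≤ Real.sqrt n * (2 * N * |y i|) :=
            mul_le_mul_of_nonneg_left h6 hsnpos.le
        _ ≤ Real.sqrt n * (2 * Real.sqrt n * |y i|) :=
            mul_le_mul_of_nonneg_left (by nlinarith [abs_nonneg (y i)]) hsnpos.le
        _ = 2 * n * |y i| := by nlinarith [abs_nonneg (y i)]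
  constructor
  · intro i hui
    have hsi : s i ≠ 0 := by
      intro h0; apply hui; rw [hu]; simp [h0]
    have he : y i * u i = (y i * s i) / euclNorm s := by
      rw [hu]; ring
    rw [he]
    exact div_pos (hpos i hsi) hN
  · intro i hui
    have hsi : s i ≠ 0 := by
      intro h0; apply hui; rw [hu]; simp [h0]
    exact hthr i hsi


lemma proj_unit {n : ℕ} {y u : Fin n → ℝ} (h : IsNTernProj y u) :
    euclNorm u = 1 ∧ ∀ i, |u i| ≤ 1 := by
  obtain ⟨s, hts, hs0, _, hu⟩ := h
  have h1 : ∑ i, u i ^ 2 = 1 := by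
    rw [hu]; exact normalized_sum_sq hs0
  have h2 : euclNorm u = 1 := by rw [euclNorm_def, h1, Real.sqrt_one]
  exact ⟨h2, fun i => h2 ▸ abs_le_euclNorm u i⟩


lemma tern_finite (n : ℕ) : {s : Fin n → ℝ | IsTern s}.Finite := by
  have hsub : {s : Fin n → ℝ | IsTern s} ⊆
      Set.pi Set.univ (fun _ : Fin n => ({-1, 0, 1} : Set ℝ)) := by
    intro s hs i _
    rcases hs i with h | h | h <;> simp [h]
  exact (Set.Finite.pi fun _ =>
    (Set.finite_singleton (1:ℝ)).insert 0 |>.insert (-1)).subset hsub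


lemma gap {n : ℕ} (hn : 1 ≤ n) {wstar : Fin n → ℝ} (hws : euclNorm wstar = 1)
    (hQ : ¬ InQ3 wstar) :
    ∃ γ : ℝ, 0 < γ ∧ ∀ s : Fin n → ℝ, IsTern s → s ≠ 0 →
      ∑ i, (s i / euclNorm s) * wstar i ≤ 1 - γ := by
  classical
  have hws2 : ∑ i, wstar i ^ 2 = 1 := by
    have h := sq_euclNorm wstar
    rw [hws] at h; simpa using h.symm
  set g : (Fin n → ℝ) → ℝ := fun s => ∑ i, (s i / euclNorm s) * wstar i with hg
  have hfin2 : (g '' {s : Fin n → ℝ | IsTern s ∧ s ≠ 0}).Finite :=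
    (((tern_finite n).subset (fun s hs => hs.1)).image g)
  have hne : (g '' {s : Fin n → ℝ | IsTern s ∧ s ≠ 0}).Nonempty := by
    refine ⟨g (fun _ => 1), ⟨fun _ => 1, ⟨fun i => Or.inr (Or.inr rfl), ?_⟩, rfl⟩⟩
    intro hcon
    have := congrFun hcon ⟨0, hn⟩
    norm_num at this
  have hFne : hfin2.toFinset.Nonempty := by
    rwa [Set.Finite.toFinset_nonempty]
  refine ⟨1 - hfin2.toFinset.max' hFne, ?_, ?_⟩
  · have hmax : hfin2.toFinset.max' hFne < 1 := by
      rw [Finset.max'_lt_iff]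
      intro b hb
      rw [Set.Finite.mem_toFinset] at hb
      obtain ⟨s, ⟨hts, hs0⟩, rfl⟩ := hb
      have hN := euclNorm_pos hs0
      have husq : ∑ i, (s i / euclNorm s) ^ 2 = 1 := normalized_sum_sq hs0
      have hne2 : (fun i => s i / euclNorm s) ≠ wstar := by
        intro hcon
        apply hQ
        refine ⟨(euclNorm s)⁻¹, inv_nonneg.2 hN.le, s, hts, ?_⟩
        funext i
        rw [← congrFun hcon i]
        simp [Pi.smul_apply, smul_eq_mul, div_eq_inv_mul]
      obtain ⟨j, hj⟩ : ∃ j, s j / euclNorm s ≠ wstar j := by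
        by_contra hcon; push_neg at hcon
        exact hne2 (funext hcon)
      have hposs : 0 < ∑ i, (s i / euclNorm s - wstar i) ^ 2 :=
        Finset.sum_pos' (fun i _ => sq_nonneg _)
          ⟨j, Finset.mem_univ j, by
            have h := sub_ne_zero.2 hj
            exact pow_pos (abs_pos.2 h) 2 |>.trans_eq (sq_abs _) ⟩
      have hexp : ∑ i, (s i / euclNorm s - wstar i) ^ 2 =
          (∑ i, (s i / euclNorm s) ^ 2) - 2 * (∑ i, (s i / euclNorm s) * wstar i)
            + ∑ i, wstar i ^ 2 := by
        have h1 : ∀ i : Fin n, (s i / euclNorm s - wstar i) ^ 2 =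
            ((s i / euclNorm s) ^ 2 - 2 * ((s i / euclNorm s) * wstar i))
              + wstar i ^ 2 := fun i => by ring
        rw [Finset.sum_congr rfl fun i _ => h1 i, Finset.sum_add_distrib,
          Finset.sum_sub_distrib, Finset.mul_sum]
      show ∑ i, (s i / euclNorm s) * wstar i < 1
      rw [husq, hws2] at hexp
      linarith
    linarith
  · intro s hts hs0
    have hmem : g s ∈ hfin2.toFinset :=
      (Set.Finite.mem_toFinset _).2 ⟨s, ⟨hts, hs0⟩, rfl⟩
    have hle := hfin2.toFinset.le_max' _ hmem
    have hle2 : (∑ i, (s i / euclNorm s) * wstar i) ≤ hfin2.toFinset.max' hFne := hle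
    linarith


set_option maxHeartbeats 2000000 in
/-- Ternary QUANT iteration with `w* ∉ Q₃`: (i) any subsequential limit of the
normalized auxiliary iterates lies in the closure of the orthant `O(w*)`;
(ii) if the orthant is regular (all coordinates of `w*` nonzero), `y^t ∈ O(w*)`
for all but finitely many `t`. -/
theorem stmt11 (n m : ℕ) (hn : 1 ≤ n)
    (wstar : Fin n → ℝ) (hws : euclNorm wstar = 1) (hQ : ¬ InQ3 wstar)
    (v : Fin m → ℝ) (hv : v ≠ 0)
    (c : ℝ) (hc : c = euclNorm v ^ 2 / (2 * Real.sqrt (2 * π)))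
    (η : ℕ → ℝ) (ηbar : ℝ) (hη0 : ∀ t, 0 < η t) (hηb : ∀ t, η t ≤ ηbar)
    (hηsum : Tendsto (fun T => ∑ t ∈ Finset.range T, η t) atTop atTop)
    (y w : ℕ → Fin n → ℝ)
    (hproj : ∀ t, IsNTernProj (y t) (w t))
    (hy : ∀ t i, y (t + 1) i = y t i + η t * c * (wstar i - w t i)) :
    (∀ tk : ℕ → ℕ, StrictMono tk → (∀ k, y (tk k) ≠ 0) →
      ∀ u : Fin n → ℝ,
        Tendsto (fun k => fun i => y (tk k) i / euclNorm (y (tk k))) atTop (nhds u) →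
        u ∈ closure (Orth wstar)) ∧
    ((∀ i, wstar i ≠ 0) → {t | y t ∉ Orth wstar}.Finite) := by
  have hπ := Real.pi_pos
  have hc0 : 0 < c := by
    rw [hc]
    have h1 : 0 < euclNorm v := euclNorm_pos hv
    positivity
  have hηbar0 : 0 < ηbar := lt_of_lt_of_le (hη0 0) (hηb 0)
  set B : ℝ := 2 * (ηbar * c) with hBdef
  have hB0 : 0 < B := by positivity
  have hwunit := fun t => proj_unit (hproj t)
  obtain ⟨γ, hγ0, hgapT⟩ := gap hn hws hQ
  have hgap : ∀ t, ∑ i, w t i * wstar i ≤ 1 - γ := by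
    intro t
    obtain ⟨s, hts, hs0, -, hu⟩ := hproj t
    have he : ∑ i, w t i * wstar i = ∑ i, (s i / euclNorm s) * wstar i := by
      apply Finset.sum_congr rfl; intro i _; rw [hu]
    rw [he]; exact hgapT s hts hs0
  have hws2 : ∑ i, wstar i ^ 2 = 1 := by
    have h := sq_euclNorm wstar; rw [hws] at h; simpa using h.symm
  have hPstep : ∀ t, (∑ i, y t i * wstar i) + η t * c * γ ≤ ∑ i, y (t+1) i * wstar i := by
    intro t
    have e1 : ∀ i, y (t+1) i * wstar i =
        y t i * wstar i + η t * c * wstar i ^ 2 - η t * c * (w t i * wstar i) := by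
      intro i; rw [hy t i]; ring
    have e2 : ∑ i, y (t+1) i * wstar i
        = (∑ i, y t i * wstar i) + η t * c * (∑ i, wstar i ^ 2)
          - η t * c * (∑ i, w t i * wstar i) := by
      rw [Finset.sum_congr rfl fun i _ => e1 i, Finset.sum_sub_distrib,
        Finset.sum_add_distrib, ← Finset.mul_sum, ← Finset.mul_sum]
    rw [e2, hws2]
    have h3 := hgap t
    have h4 : 0 < η t * c := mul_pos (hη0 t) hc0
    nlinarith
  have hPlower : ∀ T, (∑ i, y 0 i * wstar i) + c * γ * (∑ t ∈ Finset.range T, η t)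
      ≤ ∑ i, y T i * wstar i := by
    intro T
    induction T with
    | zero => simp
    | succ T ih =>
      rw [Finset.sum_range_succ]
      have := hPstep T
      nlinarith
  have hPle : ∀ t, (∑ i, y t i * wstar i) ≤ euclNorm (y t) := by
    intro t
    calc ∑ i, y t i * wstar i ≤ euclNorm (y t) * euclNorm wstar := inner_le_euclNorm _ _
      _ = euclNorm (y t) := by rw [hws, mul_one]
  have hnorm_ev : ∀ M : ℝ, ∀ᶠ t in atTop, M ≤ euclNorm (y t) := by
    intro M
    have hcγ : 0 < c * γ := mul_pos hc0 hγ0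
    have hev := hηsum.eventually_ge_atTop ((M - ∑ i, y 0 i * wstar i) / (c * γ))
    filter_upwards [hev] with T hT
    have h1 : M - (∑ i, y 0 i * wstar i) ≤ c * γ * ∑ t ∈ Finset.range T, η t := by
      rw [div_le_iff₀ hcγ] at hT
      nlinarith
    linarith [hPlower T, hPle T]
  have hstep : ∀ t i, |y (t+1) i - y t i| ≤ B := by
    intro t i
    have h1 : |wstar i| ≤ 1 := by have := abs_le_euclNorm wstar i; rwa [hws] at this
    have h2 : |w t i| ≤ 1 := (hwunit t).2 i
    have h3 : y (t+1) i - y t i = η t * c * (wstar i - w t i) := by rw [hy t i]; ring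
    rw [h3, abs_mul]
    have h4 : |η t * c| = η t * c := abs_of_pos (mul_pos (hη0 t) hc0)
    rw [h4]
    have h5 : |wstar i - w t i| ≤ 2 := by
      rw [abs_le]
      constructor
      · linarith [(abs_le.1 h1).1, (abs_le.1 h2).2]
      · linarith [(abs_le.1 h1).2, (abs_le.1 h2).1]
    calc η t * c * |wstar i - w t i| ≤ η t * c * 2 := by
          nlinarith [mul_pos (hη0 t) hc0]
      _ ≤ B := by rw [hBdef]; nlinarith [hηb t, hc0]
  have key : ∀ i, wstar i ≠ 0 → ∀ᶠ t in atTop, 0 < Real.sign (wstar i) * y t i := by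
    intro i hwi
    obtain ⟨hσ1, hσw⟩ : (Real.sign (wstar i) = 1 ∨ Real.sign (wstar i) = -1)
        ∧ 0 < Real.sign (wstar i) * wstar i := by
      rcases lt_trichotomy (wstar i) 0 with h | h | h
      · rw [Real.sign_of_neg h]; exact ⟨Or.inr rfl, by linarith⟩
      · exact absurd h hwi
      · rw [Real.sign_of_pos h]; exact ⟨Or.inl rfl, by linarith⟩
    set σ := Real.sign (wstar i) with hσdef
    have hσabs : |σ| = 1 := by rcases hσ1 with h | h <;> rw [h] <;> norm_num
    set M : ℝ := 2 * n * (B + 1) + 1 with hMdef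
    obtain ⟨T0, hT0⟩ := eventually_atTop.mp (hnorm_ev M)
    have hyne : ∀ t, T0 ≤ t → y t ≠ 0 := by
      intro t ht hcon
      have h1 := hT0 t ht
      rw [hcon] at h1
      have h2 : euclNorm (0 : Fin n → ℝ) = 0 := by
        rw [euclNorm_def]; simp
      rw [h2] at h1
      have hn' : (1:ℝ) ≤ n := by exact_mod_cast hn
      nlinarith
    have hpers : ∀ t, T0 ≤ t → 0 < σ * y t i → 0 < σ * y (t+1) i := by
      intro t ht hposi
      obtain ⟨hsgn, hthr⟩ := proj_core (hyne t ht) (hproj t)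
      by_cases hw : w t i = 0
      · have he : σ * y (t+1) i = σ * y t i + η t * c * (σ * wstar i) := by
          rw [hy t i, hw]; ring
        have h4 := mul_pos (mul_pos (hη0 t) hc0) hσw
        rw [he]; linarith
      · have h1 : euclNorm (y t) ≤ 2 * n * |y t i| := hthr i hw
        have h2 : M ≤ euclNorm (y t) := hT0 t ht
        have h3 : B + 1 ≤ |y t i| := by
          have hn' : (1:ℝ) ≤ n := by exact_mod_cast hn
          nlinarith
        have h4 : σ * y t i = |y t i| := by
          have h5 : |σ * y t i| = |y t i| := by rw [abs_mul, hσabs, one_mul]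
          rw [← h5]; exact (abs_of_pos hposi).symm
        have h5 := hstep t i
        have h6 : -B ≤ σ * (y (t+1) i - y t i) := by
          have h7 : |σ * (y (t+1) i - y t i)| ≤ B := by
            rw [abs_mul, hσabs, one_mul]; exact h5
          linarith [(abs_le.1 h7).1]
        have h7 : σ * y (t+1) i = σ * y t i + σ * (y (t+1) i - y t i) := by ring
        rw [h7]; linarith
    have hgain : ∀ t, T0 ≤ t → σ * y t i ≤ 0 →
        σ * y t i + η t * c * (σ * wstar i) ≤ σ * y (t+1) i := by
      intro t ht hneg
      obtain ⟨hsgn, -⟩ := proj_core (hyne t ht) (hproj t)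
      have hσsq : σ * σ = 1 := by rcases hσ1 with h | h <;> rw [h] <;> norm_num
      have hwle : σ * w t i ≤ 0 := by
        by_cases hw : w t i = 0
        · rw [hw]; simp
        · have hyw := hsgn i hw
          nlinarith [hσsq]
      have he : σ * y (t+1) i
          = σ * y t i + η t * c * (σ * wstar i) - η t * c * (σ * w t i) := by
        rw [hy t i]; ring
      have h4 := mul_pos (hη0 t) hc0
      rw [he]; nlinarith
    have hesc : ∃ t1, T0 ≤ t1 ∧ 0 < σ * y t1 i := by
      by_contra hcon
      push_neg at hcon
      have hacc : ∀ k : ℕ, σ * y T0 i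
          + c * (σ * wstar i) * (∑ t ∈ Finset.Ico T0 (T0 + k), η t)
            ≤ σ * y (T0 + k) i := by
        intro k
        induction k with
        | zero => simp
        | succ k ih =>
          have hle : T0 ≤ T0 + k := Nat.le_add_right T0 k
          rw [show T0 + (k+1) = (T0+k) + 1 from rfl, Finset.sum_Ico_succ_top hle]
          have hg := hgain (T0 + k) hle (hcon (T0+k) hle)
          nlinarith [hg, ih]
      set D := c * (σ * wstar i) with hDdef
      have hD0 : 0 < D := mul_pos hc0 hσw
      obtain ⟨K, hK1, hK2⟩ := ((hηsum.eventually_ge_atTop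
          ((∑ t ∈ Finset.range T0, η t) + (-(σ * y T0 i)) / D + 1)).and
          (eventually_ge_atTop T0)).exists
      have hKk : T0 + (K - T0) = K := Nat.add_sub_cancel' hK2
      have hsum : ∑ t ∈ Finset.Ico T0 K, η t
          = (∑ t ∈ Finset.range K, η t) - ∑ t ∈ Finset.range T0, η t := by
        rw [Finset.sum_Ico_eq_sub _ hK2]
      have hS : (-(σ * y T0 i)) / D + 1 ≤ ∑ t ∈ Finset.Ico T0 K, η t := by
        rw [hsum]; linarith
      have hacc' := hacc (K - T0)
      rw [hKk] at hacc'
      have hK3 := hcon K hK2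
      have hDS : D * ((-(σ * y T0 i)) / D + 1) ≤ D * ∑ t ∈ Finset.Ico T0 K, η t :=
        mul_le_mul_of_nonneg_left hS hD0.le
      have hdc : D * ((-(σ * y T0 i)) / D) = -(σ * y T0 i) := by
        rw [mul_comm]; exact div_mul_cancel₀ _ hD0.ne'
      nlinarith [hacc', hK3, hDS, hdc]
    obtain ⟨t1, ht1, hpos1⟩ := hesc
    rw [eventually_atTop]
    refine ⟨t1, fun t ht => ?_⟩
    induction t, ht using Nat.le_induction with
    | base => exact hpos1
    | succ t ht ih => exact hpers t (le_trans ht1 ht) ih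
  have hbdd : ∀ i, wstar i = 0 → ∀ t, |y t i| ≤ max (|y 0 i|) B := by
    intro i hwi
    have hstep0 : ∀ t, |y (t+1) i| ≤ max (|y t i|) B := by
      intro t
      by_cases hw : w t i = 0
      · have he : y (t+1) i = y t i := by rw [hy t i, hwi, hw]; ring
        rw [he]; exact le_max_left _ _
      · by_cases hy0 : y t = 0
        · have hyti : y t i = 0 := by rw [hy0]; rfl
          have he : y (t+1) i = - (η t * c * w t i) := by
            rw [hy t i, hwi, hyti]; ring
          have h2 : |w t i| ≤ 1 := (hwunit t).2 i
          have h3 : |y (t+1) i| ≤ B := by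
            rw [he, abs_neg, abs_mul, abs_of_pos (mul_pos (hη0 t) hc0), hBdef]
            nlinarith [hηb t, hc0, abs_nonneg (w t i), mul_pos (hη0 t) hc0]
          exact le_trans h3 (le_max_right _ _)
        · obtain ⟨hsgn, -⟩ := proj_core hy0 (hproj t)
          have hyw := hsgn i hw
          have he : y (t+1) i = y t i - η t * c * w t i := by
            rw [hy t i, hwi]; ring
          have hdB : |η t * c * w t i| ≤ B := by
            rw [abs_mul, abs_of_pos (mul_pos (hη0 t) hc0), hBdef]
            have h2 : |w t i| ≤ 1 := (hwunit t).2 i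
            nlinarith [hηb t, hc0, abs_nonneg (w t i), mul_pos (hη0 t) hc0]
          have hdsign : 0 < y t i * (η t * c * w t i) := by
            have h1 : y t i * (η t * c * w t i) = (η t * c) * (y t i * w t i) := by ring
            rw [h1]; exact mul_pos (mul_pos (hη0 t) hc0) hyw
          rw [he]
          rcases lt_trichotomy (y t i) 0 with h | h | h
          · have hd0 : η t * c * w t i < 0 := by nlinarith
            rw [abs_le]
            constructor
            · have hna := neg_abs_le (y t i)
              have hml := le_max_left (|y t i|) B
              linarith
            · have hba := (abs_le.1 hdB).1
              have hmr := le_max_right (|y t i|) B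
              linarith
          · exfalso; rw [h] at hdsign; simp at hdsign
          · have hd0 : 0 < η t * c * w t i := by nlinarith
            rw [abs_le]
            constructor
            · have hba := (abs_le.1 hdB).2
              have hmr := le_max_right (|y t i|) B
              linarith
            · have hls : y t i ≤ |y t i| := le_abs_self _
              have hml := le_max_left (|y t i|) B
              linarith
    intro t
    induction t with
    | zero => exact le_max_left _ _
    | succ t ih => exact le_trans (hstep0 t) (max_le ih (le_max_right _ _))
  constructor
  · intro tk htk hk u hu
    have htki : Tendsto tk atTop atTop := htk.tendsto_atTop
    have hui : ∀ i, (wstar i ≠ 0 → 0 ≤ Real.sign (wstar i) * u i)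
        ∧ (wstar i = 0 → u i = 0) := by
      intro i
      have hcomp : Tendsto (fun k => y (tk k) i / euclNorm (y (tk k))) atTop (nhds (u i)) :=
        tendsto_pi_nhds.mp hu i
      constructor
      · intro hwi
        have hev2 : ∀ᶠ k in atTop,
            0 ≤ Real.sign (wstar i) * (y (tk k) i / euclNorm (y (tk k))) := by
          filter_upwards [htki.eventually (key i hwi), htki.eventually (hnorm_ev 1)]
            with k h1 h2
          have hpos : (0:ℝ) < euclNorm (y (tk k)) := lt_of_lt_of_le one_pos h2
          have he : Real.sign (wstar i) * (y (tk k) i / euclNorm (y (tk k)))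
              = (Real.sign (wstar i) * y (tk k) i) / euclNorm (y (tk k)) := by ring
          rw [he]
          exact div_nonneg h1.le hpos.le
        exact ge_of_tendsto (hcomp.const_mul (Real.sign (wstar i))) hev2
      · intro hwi
        have hC := hbdd i hwi
        have hdiv : Tendsto (fun k => euclNorm (y (tk k))) atTop atTop :=
          tendsto_atTop.2 fun M => htki.eventually (hnorm_ev M)
        have hzero : Tendsto (fun k => y (tk k) i / euclNorm (y (tk k))) atTop (nhds 0) := by
          have hb : ∀ᶠ k in atTop, ‖y (tk k) i / euclNorm (y (tk k))‖
              ≤ (fun k => max (|y 0 i|) B / euclNorm (y (tk k))) k := by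
            filter_upwards [htki.eventually (hnorm_ev 1)] with k h2
            have hpos : (0:ℝ) < euclNorm (y (tk k)) := lt_of_lt_of_le one_pos h2
            show |y (tk k) i / euclNorm (y (tk k))| ≤ _
            rw [abs_div, abs_of_pos hpos]
            rw [div_le_div_iff_of_pos_right hpos]
            exact hC (tk k)
          have hg : Tendsto (fun k => max (|y 0 i|) B / euclNorm (y (tk k)))
              atTop (nhds 0) := Tendsto.div_atTop tendsto_const_nhds hdiv
          exact squeeze_zero_norm' hb hg
        exact tendsto_nhds_unique hcomp hzero
    rw [Metric.mem_closure_iff]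
    intro ε hε
    refine ⟨fun i => u i + (ε/2) * Real.sign (wstar i), ?_, ?_⟩
    · intro i
      show Real.sign (u i + ε / 2 * Real.sign (wstar i)) = Real.sign (wstar i)
      rcases lt_trichotomy (wstar i) 0 with h | h | h
      · have h1 := (hui i).1 (ne_of_lt h)
        rw [Real.sign_of_neg h] at h1 ⊢
        have h2 : u i + ε/2 * (-1) < 0 := by nlinarith
        rw [Real.sign_of_neg h2]
      · have h1 := (hui i).2 h
        rw [h, Real.sign_zero, h1]
        norm_num [Real.sign_zero]
      · have h1 := (hui i).1 (ne_of_gt h)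
        rw [Real.sign_of_pos h] at h1 ⊢
        have h2 : 0 < u i + ε/2 * 1 := by nlinarith
        rw [Real.sign_of_pos h2]
    · rw [dist_pi_lt_iff hε]
      intro i
      rw [Real.dist_eq]
      have h1 : |Real.sign (wstar i)| ≤ 1 := by
        rcases lt_trichotomy (wstar i) 0 with h | h | h
        · rw [Real.sign_of_neg h]; norm_num
        · rw [h, Real.sign_zero]; norm_num
        · rw [Real.sign_of_pos h]; norm_num
      have he : |u i - (u i + ε/2 * Real.sign (wstar i))|
          = (ε/2) * |Real.sign (wstar i)| := by
        rw [show u i - (u i + ε/2 * Real.sign (wstar i))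
            = -(ε/2 * Real.sign (wstar i)) by ring,
          abs_neg, abs_mul, abs_of_pos (by linarith : (0:ℝ) < ε/2)]
      rw [he]
      nlinarith
  · intro hreg
    have hev : ∀ᶠ t in atTop, ∀ i, 0 < Real.sign (wstar i) * y t i :=
      eventually_all.2 fun i => key i (hreg i)
    have hev2 : ∀ᶠ t in cofinite, y t ∈ Orth wstar := by
      rw [Nat.cofinite_eq_atTop]
      filter_upwards [hev] with t ht
      intro i
      rcases lt_trichotomy (wstar i) 0 with h | h | h
      · have h1 := ht i
        rw [Real.sign_of_neg h] at h1
        have h2 : y t i < 0 := by nlinarith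
        rw [Real.sign_of_neg h2, Real.sign_of_neg h]
      · exact absurd h (hreg i)
      · have h1 := ht i
        rw [Real.sign_of_pos h] at h1
        have h2 : 0 < y t i := by nlinarith
        rw [Real.sign_of_pos h2, Real.sign_of_pos h]
    exact eventually_cofinite.mp hev2
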